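/- Assume that a^V_{k0} > 0 and a^V_{k1} > 0 for all k = 1,…,K (no separation in the validation set), and that min(a_{k0}, a_{k1}) = 0 with max(a_{k0}, a_{k1}) = a_{k•} > 0 for all k = 1,…,K (complete separation in the original data). Then there exists δ > 0 such that the validation deviance D^V is strictly decreasing on (0, δ): for all 0 < λ₁ < λ₂ < δ one has D^V(λ₂) < D^V(λ₁); in particular D^V is not minimized in any right-neighborhood of 0, so its minimizer over (0, ∞), when it exists, is strictly positive. -/

import Mathlib

/-- Validation deviance: training counts `a0, a1`, validation counts `av0, av1`, ridge
probability estimate `π̂_k(λ) = (a_{k1} + 2λ)/(a_{k•} + 4λ)`. -/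
noncomputable def validDev (K : ℕ) (a0 a1 av0 av1 : Fin K → ℕ) (l : ℝ) : ℝ :=
  -2 * ∑ k : Fin K,
    ((av0 k : ℝ) *
        Real.log (1 - ((a1 k : ℝ) + 2 * l) / ((a0 k : ℝ) + (a1 k : ℝ) + 4 * l)) +
     (av1 k : ℝ) *
        Real.log (((a1 k : ℝ) + 2 * l) / ((a0 k : ℝ) + (a1 k : ℝ) + 4 * l)))

/-!
In a completely separated cell with `n` training observations, the ridge estimate of the class
never seen in training is `2λ / (n + 4λ)`, which tends to `0` with `λ`. If that class has `b > 0`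
validation observations and the other one `c`, the cell's validation log-likelihood is
`b log (2λ) + c log (n + 2λ) - (b + c) log (n + 4λ)`, with derivative
`n (b n + 2 (b - c) λ) / (λ (n + 2λ) (n + 4λ))`. This is positive for `λ < b n / (2 c + 1)`, so
each cell's log-likelihood increases near `0`, and so does their sum on the smallest of these
intervals.
-/

open Real Set Finset

theorem exists_strictMonoOn_sum {ι α β : Type*} [Fintype ι] [Nonempty ι] [LinearOrder α]
    [AddCommMonoid β] [PartialOrder β] [IsOrderedCancelAddMonoid β] {a : α} {f : ι → α → β}
    (hf : ∀ i, ∃ δ, a < δ ∧ StrictMonoOn (f i) (Ioo a δ)) :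
    ∃ δ, a < δ ∧ StrictMonoOn (fun x => ∑ i, f i x) (Ioo a δ) := by
  choose δ haδ hmono using hf
  refine ⟨univ.inf' univ_nonempty δ, (lt_inf'_iff _).mpr fun i _ => haδ i, ?_⟩
  intro x hx y hy hxy
  refine sum_lt_sum_of_nonempty univ_nonempty fun i hi => hmono i ?_ ?_ hxy
  · exact Ioo_subset_Ioo_right (inf'_le δ hi) hx
  · exact Ioo_subset_Ioo_right (inf'_le δ hi) hy

noncomputable def separatedCellLogLik (b c n l : ℝ) : ℝ :=
  b * log (2 * l) + c * log (n + 2 * l) - (b + c) * log (n + 4 * l)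

theorem hasDerivAt_separatedCellLogLik (b c : ℝ) {n l : ℝ} (hn : 0 ≤ n) (hl : 0 < l) :
    HasDerivAt (separatedCellLogLik b c n)
      (n * (b * n + 2 * (b - c) * l) / (l * (n + 2 * l) * (n + 4 * l))) l := by
  have hlin : ∀ a m : ℝ, HasDerivAt (fun x => a + m * x) m l := fun a m => by
    simpa using ((hasDerivAt_id l).const_mul m).const_add a
  have h2 := ((hlin 0 2).log (by positivity)).const_mul b
  have h3 := ((hlin n 2).log (by positivity)).const_mul c
  have h4 := ((hlin n 4).log (by positivity)).const_mul (b + c)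
  refine ((h2.add h3).sub h4).congr_deriv ?_ |>.congr_of_eventuallyEq ?_
  · field_simp
    ring
  · exact Filter.Eventually.of_forall fun x => by simp [separatedCellLogLik]

theorem strictMonoOn_separatedCellLogLik {b c n : ℝ} (hb : 0 < b) (hc : 0 ≤ c) (hn : 0 < n) :
    StrictMonoOn (separatedCellLogLik b c n) (Ioo 0 (b * n / (2 * c + 1))) := by
  have hderiv : ∀ l ∈ Ioo 0 (b * n / (2 * c + 1)), HasDerivAt (separatedCellLogLik b c n)
      (n * (b * n + 2 * (b - c) * l) / (l * (n + 2 * l) * (n + 4 * l))) l :=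
    fun l hl => hasDerivAt_separatedCellLogLik b c hn.le hl.1
  refine strictMonoOn_of_deriv_pos (convex_Ioo _ _)
    (fun l hl => (hderiv l hl).continuousAt.continuousWithinAt) fun l hl => ?_
  rw [interior_Ioo] at hl
  obtain ⟨hl0, hlδ⟩ := hl
  rw [(hderiv l ⟨hl0, hlδ⟩).deriv]
  have : (2 * c + 1) * l < b * n := (lt_div_iff₀' (by positivity)).mp hlδ
  have : 0 < b * n + 2 * (b - c) * l := by nlinarith
  positivity

noncomputable def ridgeCellLogLik (a0 a1 v0 v1 l : ℝ) : ℝ :=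
  v0 * log (1 - (a1 + 2 * l) / (a0 + a1 + 4 * l)) + v1 * log ((a1 + 2 * l) / (a0 + a1 + 4 * l))

theorem ridgeCellLogLik_zero_right (v0 v1 : ℝ) {n l : ℝ} (hn : 0 ≤ n) (hl : 0 < l) :
    ridgeCellLogLik n 0 v0 v1 l = separatedCellLogLik v1 v0 n l := by
  have hsub : 1 - (0 + 2 * l) / (n + 0 + 4 * l) = (n + 2 * l) / (n + 4 * l) := by
    field_simp
    ring
  rw [ridgeCellLogLik, hsub, zero_add, add_zero, log_div (by positivity) (by positivity),
    log_div (by positivity) (by positivity), separatedCellLogLik]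
  ring

theorem ridgeCellLogLik_zero_left (v0 v1 : ℝ) {n l : ℝ} (hn : 0 ≤ n) (hl : 0 < l) :
    ridgeCellLogLik 0 n v0 v1 l = separatedCellLogLik v0 v1 n l := by
  have hsub : 1 - (n + 2 * l) / (0 + n + 4 * l) = 2 * l / (n + 4 * l) := by
    field_simp
    ring
  rw [ridgeCellLogLik, hsub, zero_add, log_div (by positivity) (by positivity),
    log_div (by positivity) (by positivity), separatedCellLogLik]
  ring

theorem exists_strictMonoOn_ridgeCellLogLik {a0 a1 v0 v1 : ℕ} (hv : 0 < v0 ∧ 0 < v1)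
    (hsep : min a0 a1 = 0) (hpos : 0 < a0 + a1) :
    ∃ δ, 0 < δ ∧ StrictMonoOn (ridgeCellLogLik a0 a1 v0 v1) (Ioo 0 δ) := by
  have ⟨hv0, hv1⟩ : (0 : ℝ) < v0 ∧ (0 : ℝ) < v1 := by exact_mod_cast hv
  rcases Nat.min_eq_zero_iff.mp hsep with rfl | rfl
  · have hn : (0 : ℝ) < a1 := Nat.cast_pos.mpr (by omega)
    refine ⟨_, by positivity, (strictMonoOn_separatedCellLogLik hv0 hv1.le hn).congr
      fun l hl => ?_⟩
    rw [Nat.cast_zero, ridgeCellLogLik_zero_left _ _ hn.le hl.1]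
  · have hn : (0 : ℝ) < a0 := Nat.cast_pos.mpr (by omega)
    refine ⟨_, by positivity, (strictMonoOn_separatedCellLogLik hv1 hv0.le hn).congr
      fun l hl => ?_⟩
    rw [Nat.cast_zero, ridgeCellLogLik_zero_right _ _ hn.le hl.1]

/-- No separation in the validation set and complete separation in the original data:
the validation deviance is strictly decreasing on some `(0, δ)`; in particular it has no
minimizer over `(0, ∞)` below `δ`, so any minimizer is strictly positive. -/
theorem stmt16 (K : ℕ) (hK : 1 ≤ K) (a0 a1 av0 av1 : Fin K → ℕ)
    (hv : ∀ k, 0 < av0 k ∧ 0 < av1 k)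
    (hs : ∀ k, min (a0 k) (a1 k) = 0 ∧ max (a0 k) (a1 k) = a0 k + a1 k ∧
      0 < a0 k + a1 k) :
    ∃ δ : ℝ, 0 < δ ∧
      (∀ l1 l2 : ℝ, 0 < l1 → l1 < l2 → l2 < δ →
        validDev K a0 a1 av0 av1 l2 < validDev K a0 a1 av0 av1 l1) ∧
      ∀ lam : ℝ, 0 < lam → lam < δ →
        ¬ (∀ l' : ℝ, 0 < l' →
            validDev K a0 a1 av0 av1 lam ≤ validDev K a0 a1 av0 av1 l') := by
  have : Nonempty (Fin K) := ⟨⟨0, hK⟩⟩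
  obtain ⟨δ, hδ, hmono⟩ := exists_strictMonoOn_sum fun k =>
    exists_strictMonoOn_ridgeCellLogLik (hv k) (hs k).1 (hs k).2.2
  have hanti : StrictAntiOn (validDev K a0 a1 av0 av1) (Ioo 0 δ) := fun x hx y hy hxy => by
    have hlt := hmono hx hy hxy
    simp only [validDev, ridgeCellLogLik] at hlt ⊢
    linarith
  refine ⟨δ, hδ, fun l1 l2 h1 h12 h2 => hanti ⟨h1, h12.trans h2⟩ ⟨h1.trans h12, h2⟩ h12, ?_⟩
  intro lam hlam hlamδ hmin
  obtain ⟨l', hlaml', hl'δ⟩ := exists_between hlamδ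
  have hl' : 0 < l' := hlam.trans hlaml'
  exact (hanti ⟨hlam, hlamδ⟩ ⟨hl', hl'δ⟩ hlaml').not_ge (hmin l' hl')
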